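/- Let (Γ_Qual, Γ_Forb) be an access structure on Fin n with enumeration Γ_Qual = {Q_1, …, Q_t} and qualified matrix G. Let B0, B1 : Matrix (Fin t) (Fin m) (ZMod 2) be such that both systems G * X = B0 and G * X = B1 are consistent, w(row k of B0) < w(row k of B1) for every k, and {X[F] : G * X = B0} = {X[F] : G * X = B1} for every F ∈ Γ_Forb. Then w(row k of (B0 + B1)) > 0 for every k, and {X[F] : G * X = 0} = {X[F] : G * X = B0 + B1} for every F ∈ Γ_Forb. Hence the solution sets of G * X = 0 and G * X = B0 + B1 form an SXVCS for (Γ_Qual, Γ_Forb) with the same pixel expansion m and with perfect white pixel reconstruction (every white reconstruction vector is the zero vector). -/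
import Mathlib


open scoped Classical

noncomputable section

/-- Hamming weight of a vector over `ZMod 2`. -/
def wt {m : ℕ} (v : Fin m → ZMod 2) : ℕ :=
  (Finset.univ.filter fun j => v j = 1).card

/-- `⊕M[Q]` : XOR (sum over `ZMod 2`) of the rows of `M` with index in `Q`. -/
def xorRows {n m : ℕ} (M : Matrix (Fin n) (Fin m) (ZMod 2)) (Q : Finset (Fin n)) :
    Fin m → ZMod 2 :=
  fun j => ∑ i ∈ Q, M i j

/-- `M[F]` : restriction of `M` to the rows with index in `F`. -/
def rowRestrict {n m : ℕ} (F : Finset (Fin n)) (M : Matrix (Fin n) (Fin m) (ZMod 2)) :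
    {x // x ∈ F} → Fin m → ZMod 2 :=
  fun i j => M i.1 j

/-- An access structure: a nonempty family of nonempty subsets of `Fin n`. -/
def IsAccessStructure {n : ℕ} (ΓQual : Finset (Finset (Fin n))) : Prop :=
  ΓQual.Nonempty ∧ ∀ Q ∈ ΓQual, Q.Nonempty

/-- `Γ⁻` : minimal elements of `ΓQual` under inclusion. -/
def minQual {n : ℕ} (ΓQual : Finset (Finset (Fin n))) : Finset (Finset (Fin n)) :=
  ΓQual.filter fun Q => ∀ Q' ∈ ΓQual, Q' ⊆ Q → Q' = Q

/-- `Γ_Forb` : sets containing no minimal qualified set. -/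
def Forb {n : ℕ} (ΓQual : Finset (Finset (Fin n))) (F : Finset (Fin n)) : Prop :=
  ∀ Q ∈ minQual ΓQual, ¬ Q ⊆ F

/-- XVCS: contrast + security (same matrices with same frequencies, after
normalizing by the cardinalities). -/
def XVCS {n m : ℕ} (ΓQual : Finset (Finset (Fin n)))
    (C0 C1 : Multiset (Matrix (Fin n) (Fin m) (ZMod 2))) : Prop :=
  C0 ≠ 0 ∧ C1 ≠ 0 ∧
  (∀ Q ∈ ΓQual, ∀ M0 ∈ C0, ∀ M1 ∈ C1, wt (xorRows M0 Q) < wt (xorRows M1 Q)) ∧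
  ∀ F : Finset (Fin n), Forb ΓQual F →
    ∀ D : {x // x ∈ F} → Fin m → ZMod 2,
      Multiset.card C1 * (C0.map (rowRestrict F)).count D
        = Multiset.card C0 * (C1.map (rowRestrict F)).count D

/-- Static contrast condition of an SXVCS. -/
def StaticContrast {n m : ℕ} (ΓQual : Finset (Finset (Fin n)))
    (C0 C1 : Multiset (Matrix (Fin n) (Fin m) (ZMod 2))) : Prop :=
  ∀ Q ∈ ΓQual, ∃ E0 E1 : Fin m → ZMod 2,
    (∀ M ∈ C0, xorRows M Q = E0) ∧ (∀ M ∈ C1, xorRows M Q = E1) ∧ wt E0 < wt E1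

/-- SXVCS : an XVCS satisfying the static contrast condition. -/
def SXVCS {n m : ℕ} (ΓQual : Finset (Finset (Fin n)))
    (C0 C1 : Multiset (Matrix (Fin n) (Fin m) (ZMod 2))) : Prop :=
  XVCS ΓQual C0 C1 ∧ StaticContrast ΓQual C0 C1

/-- Perfect white pixel reconstruction. -/
def PerfectWhite {n m : ℕ} (ΓQual : Finset (Finset (Fin n)))
    (C0 : Multiset (Matrix (Fin n) (Fin m) (ZMod 2))) : Prop :=
  ∀ Q ∈ ΓQual, ∀ M ∈ C0, xorRows M Q = 0

/-- Average contrast of a scheme. -/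
def avgContrast {n m : ℕ} (ΓQual : Finset (Finset (Fin n)))
    (C0 C1 : Multiset (Matrix (Fin n) (Fin m) (ZMod 2))) : ℚ :=
  (∑ Q ∈ ΓQual,
      ((C1.map fun M => (wt (xorRows M Q) : ℚ)).sum / (Multiset.card C1 : ℚ)
        - (C0.map fun M => (wt (xorRows M Q) : ℚ)).sum / (Multiset.card C0 : ℚ)) / (m : ℚ))
    / (ΓQual.card : ℚ)

/-- PXVCS : probabilistic contrast condition + security. -/
def PXVCS {n m : ℕ} (ΓQual : Finset (Finset (Fin n)))
    (C0 C1 : Multiset (Matrix (Fin n) (Fin m) (ZMod 2))) : Prop :=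
  C0 ≠ 0 ∧ C1 ≠ 0 ∧
  (∀ Q ∈ ΓQual,
    (C0.map fun M => (wt (xorRows M Q) : ℚ)).sum / (Multiset.card C0 : ℚ)
      < (C1.map fun M => (wt (xorRows M Q) : ℚ)).sum / (Multiset.card C1 : ℚ)) ∧
  ∀ F : Finset (Fin n), Forb ΓQual F →
    ∀ D : {x // x ∈ F} → Fin m → ZMod 2,
      Multiset.card C1 * (C0.map (rowRestrict F)).count D
        = Multiset.card C0 * (C1.map (rowRestrict F)).count D

/-- Qualified matrix of an enumeration `Q : Fin t → Finset (Fin n)` of `ΓQual`. -/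
def qualMatrix {t n : ℕ} (Q : Fin t → Finset (Fin n)) : Matrix (Fin t) (Fin n) (ZMod 2) :=
  fun k i => if i ∈ Q k then 1 else 0

/-- Solution set of `G * X = B` as a multiset (each solution once). -/
def solMS {t n m : ℕ} (G : Matrix (Fin t) (Fin n) (ZMod 2))
    (B : Matrix (Fin t) (Fin m) (ZMod 2)) : Multiset (Matrix (Fin n) (Fin m) (ZMod 2)) :=
  (Finset.univ.filter fun X : Matrix (Fin n) (Fin m) (ZMod 2) => G * X = B).val

/-- Symmetric difference of a family: points in an odd number of members. -/
def symmDiffFam {n : ℕ} (S : Finset (Finset (Fin n))) : Finset (Fin n) :=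
  Finset.univ.filter fun i => Odd (S.filter fun A => i ∈ A).card

/-- The `(k,n)` threshold qualified family. -/
def qualK (n k : ℕ) : Finset (Finset (Fin n)) :=
  Finset.univ.filter fun Q : Finset (Fin n) => Q.card = k


lemma ts {α : Type*} [AddCommGroup α] [Module (ZMod 2) α] (a : α) : a + a = 0 := by
  have h := two_smul (ZMod 2) a
  rw [show (2 : ZMod 2) = 0 by decide, zero_smul] at h
  exact h.symm

lemma cancel2 {α : Type*} [AddCommGroup α] [Module (ZMod 2) α] (a b : α) : a + b + b = a := by
  rw [add_assoc, ts, add_zero]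

lemma rowRestrict_add {n m : ℕ} (F : Finset (Fin n)) (X Y : Matrix (Fin n) (Fin m) (ZMod 2)) :
    rowRestrict F (X + Y) = rowRestrict F X + rowRestrict F Y := rfl

lemma xorRows_eq {n m t : ℕ} (Q : Fin t → Finset (Fin n))
    (M : Matrix (Fin n) (Fin m) (ZMod 2)) (k : Fin t) :
    xorRows M (Q k) = (qualMatrix Q * M) k := by
  funext j
  simp only [xorRows, qualMatrix, Matrix.mul_apply, ite_mul, one_mul, zero_mul]
  rw [Finset.sum_ite_mem, Finset.univ_inter]

lemma wt_zero {m : ℕ} : wt (0 : Fin m → ZMod 2) = 0 := by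
  simp [wt]

lemma wt_pos {m : ℕ} (v : Fin m → ZMod 2) (h : v ≠ 0) : 0 < wt v := by
  rw [wt, Finset.card_pos]
  obtain ⟨j, hj⟩ := Function.ne_iff.mp h
  exact ⟨j, Finset.mem_filter.mpr ⟨Finset.mem_univ _, by
    have : ∀ a : ZMod 2, a ≠ 0 → a = 1 := by decide
    exact this _ hj⟩⟩

lemma mem_solMS {t n m : ℕ} {G : Matrix (Fin t) (Fin n) (ZMod 2)}
    {B : Matrix (Fin t) (Fin m) (ZMod 2)} {M : Matrix (Fin n) (Fin m) (ZMod 2)} :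
    M ∈ solMS G B ↔ G * M = B := by
  simp [solMS]

lemma count_solMS {t n m : ℕ} (G : Matrix (Fin t) (Fin n) (ZMod 2))
    (B : Matrix (Fin t) (Fin m) (ZMod 2)) (F : Finset (Fin n))
    (D : {x // x ∈ F} → Fin m → ZMod 2) :
    ((solMS G B).map (rowRestrict F)).count D
      = (Finset.univ.filter fun X : Matrix (Fin n) (Fin m) (ZMod 2) =>
          G * X = B ∧ rowRestrict F X = D).card := by
  rw [solMS, Multiset.count_map]
  rw [show ((Finset.univ.filter fun X : Matrix (Fin n) (Fin m) (ZMod 2) => G * X = B).val.filter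
      fun a => D = rowRestrict F a)
    = ((Finset.univ.filter fun X : Matrix (Fin n) (Fin m) (ZMod 2) => G * X = B).filter
      fun a => D = rowRestrict F a).val from rfl]
  rw [← Finset.card_def, Finset.filter_filter]
  congr 1
  ext X
  simp [eq_comm]

lemma card_solMS {t n m : ℕ} (G : Matrix (Fin t) (Fin n) (ZMod 2))
    (B : Matrix (Fin t) (Fin m) (ZMod 2)) :
    Multiset.card (solMS G B)
      = (Finset.univ.filter fun X : Matrix (Fin n) (Fin m) (ZMod 2) => G * X = B).card := rfl

lemma fiber_card {t n m : ℕ} (G : Matrix (Fin t) (Fin n) (ZMod 2))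
    (B : Matrix (Fin t) (Fin m) (ZMod 2)) (F : Finset (Fin n))
    (D : {x // x ∈ F} → Fin m → ZMod 2)
    (Xd : Matrix (Fin n) (Fin m) (ZMod 2)) (hd1 : G * Xd = B) (hd2 : rowRestrict F Xd = D) :
    (Finset.univ.filter fun X : Matrix (Fin n) (Fin m) (ZMod 2) =>
        G * X = B ∧ rowRestrict F X = D).card
      = (Finset.univ.filter fun K : Matrix (Fin n) (Fin m) (ZMod 2) =>
        G * K = 0 ∧ rowRestrict F K = 0).card := by
  apply Finset.card_bij' (fun X _ => X + Xd) (fun K _ => K + Xd)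
  · intro X hX
    rw [Finset.mem_filter] at hX ⊢
    obtain ⟨-, h1, h2⟩ := hX
    refine ⟨Finset.mem_univ _, ?_, ?_⟩
    · rw [Matrix.mul_add, h1, hd1, ts]
    · rw [rowRestrict_add, h2, hd2, ts]
  · intro K hK
    rw [Finset.mem_filter] at hK ⊢
    obtain ⟨-, h1, h2⟩ := hK
    refine ⟨Finset.mem_univ _, ?_, ?_⟩
    · rw [Matrix.mul_add, h1, hd1, zero_add]
    · rw [rowRestrict_add, h2, hd2, zero_add]
  · intro X _; exact cancel2 X Xd
  · intro K _; exact cancel2 K Xd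

lemma trans_mem {t n m : ℕ} {G : Matrix (Fin t) (Fin n) (ZMod 2)}
    {B B' : Matrix (Fin t) (Fin m) (ZMod 2)} {T : Matrix (Fin n) (Fin m) (ZMod 2)}
    (hT : G * T = B + B') (F : Finset (Fin n))
    {D : {x // x ∈ F} → Fin m → ZMod 2}
    (hD : D ∈ rowRestrict F '' {X : Matrix (Fin n) (Fin m) (ZMod 2) | G * X = B}) :
    D + rowRestrict F T ∈ rowRestrict F '' {X : Matrix (Fin n) (Fin m) (ZMod 2) | G * X = B'} := by
  obtain ⟨X, hX, rfl⟩ := hD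
  refine ⟨X + T, ?_, rfl⟩
  show G * (X + T) = B'
  rw [Matrix.mul_add, Set.mem_setOf_eq.mp hX, hT, ← add_assoc, ts, zero_add]

/-- from an SXVCS given by systems `G*X = B0`, `G*X = B1` one
obtains an SXVCS with perfect white pixel reconstruction given by
`G*X = 0` and `G*X = B0 + B1`, with the same pixel expansion. -/
theorem stmt4 {n m t : ℕ} (ΓQual : Finset (Finset (Fin n)))
    (hA : IsAccessStructure ΓQual)
    (Q : Fin t → Finset (Fin n))
    (hQmem : ∀ k, Q k ∈ ΓQual) (hQsurj : ∀ A ∈ ΓQual, ∃ k, Q k = A)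
    (B0 B1 : Matrix (Fin t) (Fin m) (ZMod 2))
    (h0 : ∃ X : Matrix (Fin n) (Fin m) (ZMod 2), qualMatrix Q * X = B0)
    (h1 : ∃ X : Matrix (Fin n) (Fin m) (ZMod 2), qualMatrix Q * X = B1)
    (hw : ∀ k, wt (B0 k) < wt (B1 k))
    (hsec : ∀ F : Finset (Fin n), Forb ΓQual F →
      rowRestrict F '' {X : Matrix (Fin n) (Fin m) (ZMod 2) | qualMatrix Q * X = B0}
        = rowRestrict F '' {X : Matrix (Fin n) (Fin m) (ZMod 2) | qualMatrix Q * X = B1}) :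
    (∀ k, 0 < wt ((B0 + B1) k)) ∧
    (∀ F : Finset (Fin n), Forb ΓQual F →
      rowRestrict F '' {X : Matrix (Fin n) (Fin m) (ZMod 2) | qualMatrix Q * X = 0}
        = rowRestrict F '' {X : Matrix (Fin n) (Fin m) (ZMod 2) | qualMatrix Q * X = B0 + B1}) ∧
    SXVCS ΓQual (solMS (qualMatrix Q) 0) (solMS (qualMatrix Q) (B0 + B1)) ∧
    PerfectWhite ΓQual (solMS (qualMatrix Q) (0 : Matrix (Fin t) (Fin m) (ZMod 2))) := by
  obtain ⟨X0, hX0⟩ := h0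
  obtain ⟨X1, hX1⟩ := h1
  set G := qualMatrix Q with hG
  have hrow : ∀ k, 0 < wt ((B0 + B1) k) := by
    intro k
    apply wt_pos
    intro hzero
    have heq : B0 k = B1 k := by
      funext j
      have hz := congrFun hzero j
      simp only [Matrix.add_apply, Pi.zero_apply] at hz
      have h2 : ∀ a b : ZMod 2, a + b = 0 → a = b := by decide
      exact h2 _ _ hz
    have hk := hw k
    rw [heq] at hk
    exact lt_irrefl _ hk
  have himg : ∀ F : Finset (Fin n), Forb ΓQual F →
      rowRestrict F '' {X : Matrix (Fin n) (Fin m) (ZMod 2) | G * X = 0}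
        = rowRestrict F '' {X : Matrix (Fin n) (Fin m) (ZMod 2) | G * X = B0 + B1} := by
    intro F hF
    have hsecF := hsec F hF
    ext D
    constructor
    · intro hD
      have h1' := trans_mem (T := X0) (by rw [hX0, zero_add]) F hD
      rw [hsecF] at h1'
      have h2' := trans_mem (T := X1) (by rw [hX1, add_zero]) F h1'
      have h3' := trans_mem (T := X0 + X1)
        (by rw [Matrix.mul_add, hX0, hX1, zero_add]) F h2'
      rw [rowRestrict_add] at h3'
      rwa [show D + rowRestrict F X0 + rowRestrict F X1
          + (rowRestrict F X0 + rowRestrict F X1) = D from by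
        rw [add_assoc D, cancel2]] at h3'
    · intro hD
      have h1' := trans_mem (T := X0 + X1) (by rw [Matrix.mul_add, hX0, hX1, add_zero]) F hD
      rw [rowRestrict_add] at h1'
      have h2' := trans_mem (T := X1) (by rw [hX1, zero_add]) F h1'
      rw [← hsecF] at h2'
      have h3' := trans_mem (T := X0) (by rw [hX0, add_zero]) F h2'
      rwa [show D + (rowRestrict F X0 + rowRestrict F X1)
          + rowRestrict F X1 + rowRestrict F X0 = D from by
        rw [← add_assoc D, cancel2, cancel2]] at h3'
  have hcount : ∀ F : Finset (Fin n), Forb ΓQual F →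
      ∀ D : {x // x ∈ F} → Fin m → ZMod 2,
      ((solMS G 0).map (rowRestrict F)).count D
        = ((solMS G (B0 + B1)).map (rowRestrict F)).count D := by
    intro F hF D
    rw [count_solMS, count_solMS]
    by_cases hD : D ∈ rowRestrict F '' {X : Matrix (Fin n) (Fin m) (ZMod 2) | G * X = 0}
    · have hD' : D ∈ rowRestrict F '' {X : Matrix (Fin n) (Fin m) (ZMod 2) | G * X = B0 + B1} := by
        rw [← himg F hF]; exact hD
      obtain ⟨X, hX, hXD⟩ := hD
      obtain ⟨X', hX', hXD'⟩ := hD'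
      rw [fiber_card G 0 F D X hX hXD, fiber_card G (B0 + B1) F D X' hX' hXD']
    · have hD' : D ∉ rowRestrict F '' {X : Matrix (Fin n) (Fin m) (ZMod 2) | G * X = B0 + B1} := by
        rw [← himg F hF]; exact hD
      rw [Finset.card_eq_zero.mpr, Finset.card_eq_zero.mpr]
      · rw [Finset.filter_eq_empty_iff]
        intro X _ hX
        exact hD' ⟨X, hX.1, hX.2⟩
      · rw [Finset.filter_eq_empty_iff]
        intro X _ hX
        exact hD ⟨X, hX.1, hX.2⟩
  have hcard : Multiset.card (solMS G (0 : Matrix (Fin t) (Fin m) (ZMod 2)))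
      = Multiset.card (solMS G (B0 + B1)) := by
    rw [card_solMS, card_solMS]
    apply Finset.card_bij' (fun X _ => X + (X0 + X1)) (fun K _ => K + (X0 + X1))
    · intro X hX
      rw [Finset.mem_filter] at hX ⊢
      refine ⟨Finset.mem_univ _, ?_⟩
      rw [Matrix.mul_add, hX.2, Matrix.mul_add, hX0, hX1, zero_add]
    · intro K hK
      rw [Finset.mem_filter] at hK ⊢
      refine ⟨Finset.mem_univ _, ?_⟩
      rw [Matrix.mul_add, hK.2, Matrix.mul_add, hX0, hX1]
      exact ts _
    · intro X _; exact cancel2 X (X0 + X1)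
    · intro K _; exact cancel2 K (X0 + X1)
  have hne0 : solMS G (0 : Matrix (Fin t) (Fin m) (ZMod 2)) ≠ 0 := by
    intro h
    have h0' : (0 : Matrix (Fin n) (Fin m) (ZMod 2)) ∈ solMS G 0 :=
      mem_solMS.mpr (Matrix.mul_zero G)
    rw [h] at h0'
    exact Multiset.notMem_zero _ h0'
  have hne1 : solMS G (B0 + B1) ≠ 0 := by
    intro h
    have h1' : X0 + X1 ∈ solMS G (B0 + B1) :=
      mem_solMS.mpr (by rw [Matrix.mul_add, hX0, hX1])
    rw [h] at h1'
    exact Multiset.notMem_zero _ h1'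
  have hx0 : ∀ Q' ∈ ΓQual, ∀ M ∈ solMS G (0 : Matrix (Fin t) (Fin m) (ZMod 2)),
      xorRows M Q' = 0 := by
    intro Q' hQ' M hM
    obtain ⟨k, rfl⟩ := hQsurj Q' hQ'
    rw [xorRows_eq, mem_solMS.mp hM]
    rfl
  have hx1 : ∀ k, ∀ M ∈ solMS G (B0 + B1), xorRows M (Q k) = (B0 + B1) k := by
    intro k M hM
    rw [xorRows_eq, mem_solMS.mp hM]
  refine ⟨hrow, himg, ⟨⟨hne0, hne1, ?_, ?_⟩, ?_⟩, hx0⟩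
  · intro Q' hQ' M0 hM0 M1 hM1
    obtain ⟨k, rfl⟩ := hQsurj Q' hQ'
    rw [hx0 _ (hQmem k) M0 hM0, hx1 k M1 hM1, wt_zero]
    exact hrow k
  · intro F hF D
    rw [hcount F hF D, hcard]
  · intro Q' hQ'
    obtain ⟨k, rfl⟩ := hQsurj Q' hQ'
    exact ⟨0, (B0 + B1) k, fun M hM => hx0 _ (hQmem k) M hM, fun M hM => hx1 k M hM,
      by rw [wt_zero]; exact hrow k⟩
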